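/- arXiv:2210.10286 — 2 statements merged into one kernel-verified Lean document; each statement's English description precedes it below -/
import Mathlib

section
/- Let E be a real topological vector space whose topology is generated by a p-seminorm (0 < p ≤ 1), and let C be a bounded closed p-convex subset of E with 0 in the interior of C. Define r : E → E by r(x) = x / max{1, (P_C(x))^(1/p)}, where P_C is the Minkowski p-functional of C. Then r is a continuous retraction of E onto C; moreover: (1) if x ∈ C then r(x) = x; (2) if x ∉ C then r(x) lies in the boundary ∂C of C; (3) if x ∉ C then P_C(x) > 1. -/
open Set Pointwise

noncomputable section

/-- A subset `A` of a real vector space is `p`-convex. -/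
def PConvex (p : ℝ) {X : Type*} [AddCommGroup X] [Module ℝ X] (A : Set X) : Prop :=
  ∀ x ∈ A, ∀ y ∈ A, ∀ s t : ℝ, 0 ≤ s → 0 ≤ t → s ^ p + t ^ p = 1 →
    s ^ (1 / p) • x + t ^ (1 / p) • y ∈ A

/-- The Minkowski `p`-functional of a set `V`: `P_V(x) = inf {α > 0 : x ∈ α^(1/p) • V}`. -/
def MinkowskiP (p : ℝ) {E : Type*} [AddCommGroup E] [Module ℝ E] (V : Set E) (x : E) : ℝ :=
  sInf {α : ℝ | 0 < α ∧ x ∈ α ^ (1 / p) • V}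

/-!
The Minkowski `p`-functional of `C` is `g ^ p` for the ordinary gauge `g` of `C`, so `r` is the
radial retraction `x ↦ x / max 1 (g x)` and `g (r x) = min 1 (g x)`. As `C` is closed and
star-shaped about `0`, it equals `{g ≤ 1}`; a point of gauge exactly `1` is not interior, hence
lies on the frontier. For continuity, `p`-convexity makes `g ^ (p * p)` subadditive, and a
subadditive function continuous at `0` (here because `C` is a neighbourhood of `0`) is continuous.
-/

open Filter Topology

section VectorSpace

variable {E : Type*} [AddCommGroup E] [Module ℝ E] {p : ℝ} {C : Set E}

theorem MinkowskiP_eq_gauge_rpow (hp : 0 < p) (C : Set E) (x : E) :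
    MinkowskiP p C x = gauge C x ^ p := by
  set A := {t : ℝ | 0 < t ∧ x ∈ t • C}
  have himage : {α : ℝ | 0 < α ∧ x ∈ α ^ (1 / p) • C} = (· ^ p) '' A := by
    ext α
    constructor
    · rintro ⟨hα, hx⟩
      refine ⟨α ^ (1 / p), ⟨by positivity, hx⟩, ?_⟩
      simp only [one_div, Real.rpow_inv_rpow hα.le hp.ne']
    · rintro ⟨t, ⟨ht, hx⟩, rfl⟩
      exact ⟨by positivity, by rwa [one_div, Real.rpow_rpow_inv ht.le hp.ne']⟩
  change sInf _ = sInf A ^ p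
  rw [himage]
  rcases A.eq_empty_or_nonempty with hA | hA
  · rw [hA, image_empty, Real.sInf_empty, Real.zero_rpow hp.ne']
  · exact ((Real.monotoneOn_rpow_Ici_of_exponent_nonneg hp.le).mono fun t ht => ht.1.le)
      |>.map_csInf_of_continuousWithinAt
        (Real.continuousAt_rpow_const _ _ (Or.inr hp.le)).continuousWithinAt hA
        ⟨0, fun t ht => ht.1.le⟩ |>.symm

-- With `a = s ^ (1 / p)`, the constraint `s ^ p + t ^ p = 1` in `PConvex` reads as `hab`.
theorem PConvex.smul_add_smul_mem (hp : 0 < p) (hC : PConvex p C) {x y : E} (hx : x ∈ C)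
    (hy : y ∈ C) {a b : ℝ} (ha : 0 ≤ a) (hb : 0 ≤ b) (hab : a ^ (p * p) + b ^ (p * p) = 1) :
    a • x + b • y ∈ C := by
  have key := hC x hx y hy (a ^ p) (b ^ p) (by positivity) (by positivity)
    (by rwa [← Real.rpow_mul ha, ← Real.rpow_mul hb])
  rwa [one_div, Real.rpow_rpow_inv ha hp.ne', Real.rpow_rpow_inv hb hp.ne'] at key

theorem PConvex.starConvex (hp : 0 < p) (hC : PConvex p C) (h0 : (0 : E) ∈ C) :
    StarConvex ℝ 0 C := by
  rw [starConvex_zero_iff]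
  intro x hx μ hμ0 hμ1
  have hpp : 0 < p * p := mul_pos hp hp
  have hμp : μ ^ (p * p) ≤ 1 := Real.rpow_le_one hμ0 hμ1 hpp.le
  simpa using hC.smul_add_smul_mem hp hx h0 hμ0
    (Real.rpow_nonneg (sub_nonneg.2 hμp) (p * p)⁻¹)
    (by rw [Real.rpow_inv_rpow (sub_nonneg.2 hμp) hpp.ne']; ring)

theorem PConvex.add_mem_smul (hp : 0 < p) (hC : PConvex p C) {x y : E} {a b : ℝ}
    (ha : 0 < a) (hb : 0 < b) (hx : x ∈ a • C) (hy : y ∈ b • C) :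
    x + y ∈ (a ^ (p * p) + b ^ (p * p)) ^ (p * p)⁻¹ • C := by
  obtain ⟨u, hu, rfl⟩ := hx
  obtain ⟨v, hv, rfl⟩ := hy
  have hpp : 0 < p * p := mul_pos hp hp
  set c := (a ^ (p * p) + b ^ (p * p)) ^ (p * p)⁻¹
  have hc : 0 < c := by positivity
  have hcp : c ^ (p * p) = a ^ (p * p) + b ^ (p * p) := Real.rpow_inv_rpow (by positivity) hpp.ne'
  refine ⟨(a / c) • u + (b / c) • v,
    hC.smul_add_smul_mem hp hu hv (by positivity) (by positivity) ?_, ?_⟩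
  · rw [Real.div_rpow ha.le hc.le, Real.div_rpow hb.le hc.le, hcp]
    field_simp
  · simp only [smul_add, smul_smul, mul_div_cancel₀ _ hc.ne']

theorem PConvex.gauge_add_rpow_le (hp : 0 < p) (hC : PConvex p C) (hCa : Absorbent ℝ C)
    (x y : E) : gauge C (x + y) ^ (p * p) ≤ gauge C x ^ (p * p) + gauge C y ^ (p * p) := by
  have hpp : 0 < p * p := mul_pos hp hp
  have hle : ∀ a > gauge C x, ∀ b > gauge C y,
      gauge C (x + y) ^ (p * p) ≤ a ^ (p * p) + b ^ (p * p) := by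
    intro a ha b hb
    obtain ⟨a', ha'0, ha'a, hx⟩ := exists_lt_of_gauge_lt hCa ha
    obtain ⟨b', hb'0, hb'b, hy⟩ := exists_lt_of_gauge_lt hCa hb
    calc gauge C (x + y) ^ (p * p)
        ≤ ((a' ^ (p * p) + b' ^ (p * p)) ^ (p * p)⁻¹) ^ (p * p) := by
          gcongr
          · exact gauge_nonneg _
          exact gauge_le_of_mem (by positivity) (hC.add_mem_smul hp ha'0 hb'0 hx hy)
      _ = a' ^ (p * p) + b' ^ (p * p) := Real.rpow_inv_rpow (by positivity) hpp.ne'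
      _ ≤ a ^ (p * p) + b ^ (p * p) := by gcongr
  have hlim : Tendsto (fun ab : ℝ × ℝ => ab.1 ^ (p * p) + ab.2 ^ (p * p))
      (𝓝[>] (gauge C x) ×ˢ 𝓝[>] (gauge C y))
      (𝓝 (gauge C x ^ (p * p) + gauge C y ^ (p * p))) :=
    ((tendsto_fst.mono_right nhdsWithin_le_nhds).rpow_const (Or.inr hpp.le)).add
      ((tendsto_snd.mono_right nhdsWithin_le_nhds).rpow_const (Or.inr hpp.le))
  refine ge_of_tendsto hlim ?_
  filter_upwards [prod_mem_prod self_mem_nhdsWithin self_mem_nhdsWithin] with ab hab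
    using hle _ hab.1 _ hab.2

theorem gauge_inv_max_one_smul (s : Set E) (x : E) :
    gauge s ((max 1 (gauge s x))⁻¹ • x) = min 1 (gauge s x) := by
  rw [gauge_smul_of_nonneg (by positivity), smul_eq_mul]
  rcases le_total (gauge s x) 1 with h | h
  · simp [h]
  · rw [max_eq_right h, min_eq_left h, inv_mul_cancel₀ (by positivity)]

end VectorSpace

theorem continuous_of_subadditive_of_tendsto_zero {G : Type*} [TopologicalSpace G] [AddGroup G]
    [IsTopologicalAddGroup G] {f : G → ℝ} (hadd : ∀ x y, f (x + y) ≤ f x + f y)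
    (h0 : Tendsto f (𝓝 0) (𝓝 0)) : Continuous f := by
  refine continuous_iff_continuousAt.2 fun x => ?_
  have hright : Tendsto (fun y => f (y - x)) (𝓝 x) (𝓝 0) :=
    h0.comp (tendsto_sub_nhds_zero_iff.2 tendsto_id)
  have hleft : Tendsto (fun y => f (x - y)) (𝓝 x) (𝓝 0) :=
    h0.comp (by simpa using (tendsto_sub_nhds_zero_iff.2 (tendsto_id (x := 𝓝 x))).neg)
  refine tendsto_of_tendsto_of_tendsto_of_le_of_le
    (by simpa using tendsto_const_nhds.sub hleft) (by simpa using tendsto_const_nhds.add hright)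
    (fun y => ?_) (fun y => ?_)
  · linarith [sub_add_cancel x y ▸ hadd (x - y) y]
  · linarith [sub_add_cancel y x ▸ hadd (y - x) x]

section TopologicalVectorSpace

variable {E : Type*} [AddCommGroup E] [Module ℝ E] [TopologicalSpace E] [ContinuousSMul ℝ E]
  {C : Set E}

theorem PConvex.continuous_gauge [IsTopologicalAddGroup E] {p : ℝ} (hp : 0 < p)
    (hC : PConvex p C) (hC0 : C ∈ 𝓝 0) : Continuous (gauge C) := by
  have hpp : 0 < p * p := mul_pos hp hp
  have hcont : Continuous fun x => gauge C x ^ (p * p) :=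
    continuous_of_subadditive_of_tendsto_zero
      (hC.gauge_add_rpow_le hp (absorbent_nhds_zero hC0))
      (by simpa [Real.zero_rpow hpp.ne'] using
        (tendsto_gauge_nhds_zero hC0).rpow_const (Or.inr hpp.le))
  convert hcont.rpow_const (fun _ => Or.inr (inv_nonneg.2 hpp.le)) (p := (p * p)⁻¹) with x
  exact (Real.rpow_rpow_inv (gauge_nonneg x) hpp.ne').symm

theorem StarConvex.mem_of_gauge_le_one (hs : StarConvex ℝ 0 C) (hcl : IsClosed C)
    (ha : Absorbent ℝ C) {x : E} (h : gauge C x ≤ 1) : x ∈ C := by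
  have hsmul : ∀ᶠ r : ℝ in 𝓝[<] 1, r • x ∈ C := by
    filter_upwards [Ico_mem_nhdsLT one_pos] with r ⟨hr₀, hr₁⟩
    have hlt : gauge C (r • x) < 1 := by
      rw [gauge_smul_of_nonneg hr₀, smul_eq_mul]
      exact mul_lt_one_of_nonneg_of_lt_one_left hr₀ hr₁ h
    obtain ⟨y, hy, hry⟩ := mem_openSegment_of_gauge_lt_one ha hlt
    exact hs.openSegment_subset hy hry
  refine hcl.mem_of_tendsto ?_ hsmul
  exact ((continuous_id.smul continuous_const).tendsto' 1 x (one_smul _ _)).mono_left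
    nhdsWithin_le_nhds

end TopologicalVectorSpace

theorem stmt1_general {E : Type*} [AddCommGroup E] [Module ℝ E] [TopologicalSpace E]
    [IsTopologicalAddGroup E] [ContinuousSMul ℝ E]
    (p : ℝ) (hp0 : 0 < p)
    -- `C` is a bounded closed `p`-convex set with `0` in its interior
    (C : Set E) (hCcl : IsClosed C)
    (hCp : PConvex p C) (hC0 : (0 : E) ∈ interior C)
    -- the retraction `r(x) = x / max {1, (P_C x)^(1/p)}`
    (r : E → E) (hr : ∀ x : E, r x = (max 1 ((MinkowskiP p C x) ^ (1 / p)))⁻¹ • x) :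
    Continuous r ∧ (∀ x : E, r x ∈ C) ∧
    (∀ x ∈ C, r x = x) ∧
    (∀ x ∉ C, r x ∈ frontier C) ∧
    (∀ x ∉ C, 1 < MinkowskiP p C x) := by
  have hCnhds : C ∈ 𝓝 0 := mem_interior_iff_mem_nhds.1 hC0
  have hCs : StarConvex ℝ 0 C := hCp.starConvex hp0 (mem_of_mem_nhds hCnhds)
  have hmem : ∀ x, x ∈ C ↔ gauge C x ≤ 1 := fun x =>
    ⟨gauge_le_one_of_mem, hCs.mem_of_gauge_le_one hCcl (absorbent_nhds_zero hCnhds)⟩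
  have hr' : ∀ x, r x = (max 1 (gauge C x))⁻¹ • x := fun x => by
    rw [hr, MinkowskiP_eq_gauge_rpow hp0, one_div, Real.rpow_rpow_inv (gauge_nonneg x) hp0.ne']
  have hgauge_r : ∀ x, gauge C (r x) = min 1 (gauge C x) := fun x => by
    rw [hr', gauge_inv_max_one_smul]
  have hgauge_gt : ∀ x ∉ C, 1 < gauge C x := fun x hx => not_le.1 (mt (hmem x).2 hx)
  have hrC : ∀ x, r x ∈ C := fun x => (hmem _).2 (hgauge_r x ▸ min_le_left _ _)
  refine ⟨?_, hrC, fun x hx => ?_, fun x hx => ?_, fun x hx => ?_⟩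
  · rw [funext hr']
    exact ((continuous_const.max (hCp.continuous_gauge hp0 hCnhds)).inv₀
      fun x => (zero_lt_one.trans_le (le_max_left _ _)).ne').smul continuous_id
  · rw [hr', max_eq_left ((hmem x).1 hx), inv_one, one_smul]
  · rw [hCcl.frontier_eq]
    refine ⟨hrC x, fun hint => ?_⟩
    have hlt : gauge C (r x) < 1 := interior_subset_gauge_lt_one C hint
    rw [hgauge_r, min_eq_left (hgauge_gt x hx).le] at hlt
    exact lt_irrefl _ hlt
  · rw [MinkowskiP_eq_gauge_rpow hp0]
    exact Real.one_lt_rpow (hgauge_gt x hx) hp0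

theorem stmt1 {E : Type*} [AddCommGroup E] [Module ℝ E] [TopologicalSpace E]
    [IsTopologicalAddGroup E] [ContinuousSMul ℝ E]
    (p : ℝ) (hp0 : 0 < p) (hp1 : p ≤ 1)
    -- `P` is a `p`-seminorm generating the topology of `E`
    (P : E → ℝ)
    (hP_nonneg : ∀ x, 0 ≤ P x)
    (hP_smul : ∀ (l : ℝ) (x : E), P (l • x) = |l| ^ p * P x)
    (hP_add : ∀ x y : E, P (x + y) ≤ P x + P y)
    (hP_top : ∀ x : E, (nhds x).HasBasis (fun ε : ℝ => 0 < ε)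
      (fun ε => {y | P (y - x) < ε}))
    -- `C` is a bounded closed `p`-convex set with `0` in its interior
    (C : Set E) (hCb : Bornology.IsVonNBounded ℝ C) (hCcl : IsClosed C)
    (hCp : PConvex p C) (hC0 : (0 : E) ∈ interior C)
    -- the retraction `r(x) = x / max {1, (P_C x)^(1/p)}`
    (r : E → E) (hr : ∀ x : E, r x = (max 1 ((MinkowskiP p C x) ^ (1 / p)))⁻¹ • x) :
    Continuous r ∧ (∀ x : E, r x ∈ C) ∧
    (∀ x ∈ C, r x = x) ∧
    (∀ x ∉ C, r x ∈ frontier C) ∧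
    (∀ x ∉ C, 1 < MinkowskiP p C x) :=
  stmt1_general p hp0 C hCcl hCp hC0 r hr
end
end

section
/- Let E be a Hausdorff real topological vector space, 0 < p < 1, and x ∈ E. Then the p-convex hull of the singleton {x} is C_p({x}) = {t·x : t ∈ (0, 1]} if x ≠ 0, and C_p({x}) = {0} if x = 0; moreover its closure is cl(C_p({x})) = {t·x : t ∈ [0, 1]} if x ≠ 0, and {0} if x = 0. -/
open Set

noncomputable section

/-- The `p`-convex hull of `A`: the smallest `p`-convex set containing `A`. -/
def PConvexHull (p : ℝ) {X : Type*} [AddCommGroup X] [Module ℝ X] (A : Set X) : Set X :=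
  ⋂₀ {B : Set X | PConvex p B ∧ A ⊆ B}

/-!
The `p`-convex combination of a point `y` with itself, with weights `s = u^(1/p)` and
`t = (1-u)^(1/p)`, is `(u^q + (1-u)^q) • y` with `q = 1/p² > 1`. As `u` runs over `[0, 1/2]` these
factors sweep out `[2^(1-q), 1]`, so iterating reaches every factor in `(0, 1]`. Conversely
`{t • x : t ∈ (0, 1]}` is already `p`-convex, because `s^(1/p) + t^(1/p) ≤ s^p + t^p = 1`.
-/

variable {p : ℝ}

lemma rpow_one_div_add_rpow_one_div_le_one (hp0 : 0 < p) (hp1 : p ≤ 1) {s t : ℝ}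
    (hs : 0 ≤ s) (ht : 0 ≤ t) (hst : s ^ p + t ^ p = 1) : s ^ (1 / p) + t ^ (1 / p) ≤ 1 := by
  have rpow_one_div_le_rpow : ∀ u : ℝ, 0 ≤ u → u ^ p ≤ 1 → u ^ (1 / p) ≤ u ^ p := by
    intro u hu hup
    have hu1 : u ≤ 1 := by
      by_contra! h
      exact (Real.one_lt_rpow h hp0).not_ge hup
    exact Real.rpow_le_rpow_of_exponent_ge' hu hu1 hp0.le (hp1.trans (one_le_one_div hp0 hp1))
  calc s ^ (1 / p) + t ^ (1 / p) ≤ s ^ p + t ^ p :=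
        add_le_add (rpow_one_div_le_rpow s hs (by linarith [Real.rpow_nonneg ht p]))
          (rpow_one_div_le_rpow t ht (by linarith [Real.rpow_nonneg hs p]))
    _ = 1 := hst

lemma pConvex_Ioc_zero_one (hp0 : 0 < p) (hp1 : p ≤ 1) : PConvex p (Ioc (0 : ℝ) 1) := by
  rintro a ⟨ha0, ha1⟩ b ⟨hb0, hb1⟩ s t hs ht hst
  simp only [smul_eq_mul]
  have hs' : 0 ≤ s ^ (1 / p) := Real.rpow_nonneg hs _
  have ht' : 0 ≤ t ^ (1 / p) := Real.rpow_nonneg ht _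
  constructor
  · have hst0 : 0 < s ∨ 0 < t := by
      by_contra! h
      rw [le_antisymm h.1 hs, le_antisymm h.2 ht, Real.zero_rpow hp0.ne'] at hst
      norm_num at hst
    rcases hst0 with hs0 | ht0
    · exact add_pos_of_pos_of_nonneg (mul_pos (Real.rpow_pos_of_pos hs0 _) ha0) (by positivity)
    · exact add_pos_of_nonneg_of_pos (by positivity) (mul_pos (Real.rpow_pos_of_pos ht0 _) hb0)
  · calc s ^ (1 / p) * a + t ^ (1 / p) * b ≤ s ^ (1 / p) + t ^ (1 / p) :=
          add_le_add (mul_le_of_le_one_right hs' ha1) (mul_le_of_le_one_right ht' hb1)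
      _ ≤ 1 := rpow_one_div_add_rpow_one_div_le_one hp0 hp1 hs ht hst

lemma PConvex.image {X Y : Type*} [AddCommGroup X] [Module ℝ X] [AddCommGroup Y] [Module ℝ Y]
    {A : Set X} (hA : PConvex p A) (f : X →ₗ[ℝ] Y) : PConvex p (f '' A) := by
  rintro _ ⟨a, ha, rfl⟩ _ ⟨b, hb, rfl⟩ s t hs ht hst
  exact ⟨_, hA a ha b hb s t hs ht hst, by simp⟩

lemma exists_rpow_add_rpow_eq {q r : ℝ} (hq : 0 < q) (hr : r ∈ Icc (2 * 2⁻¹ ^ q) 1) :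
    ∃ u ∈ Icc (0 : ℝ) 1, u ^ q + (1 - u) ^ q = r := by
  have hcont : ContinuousOn (fun u : ℝ => u ^ q + (1 - u) ^ q) (Icc 0 2⁻¹) := by
    have := Real.continuous_rpow_const hq.le
    exact Continuous.continuousOn (by fun_prop)
  have hf0 : (0 : ℝ) ^ q + (1 - 0) ^ q = 1 := by simp [Real.zero_rpow hq.ne']
  have hfhalf : (2⁻¹ : ℝ) ^ q + (1 - 2⁻¹) ^ q = 2 * 2⁻¹ ^ q := by norm_num; ring
  obtain ⟨u, ⟨hu0, hu1⟩, hfu⟩ :=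
    intermediate_value_Icc' (by norm_num) hcont (by rwa [hf0, hfhalf])
  exact ⟨u, ⟨hu0, hu1.trans (by norm_num)⟩, hfu⟩

section Scaling

variable {E : Type*} [AddCommGroup E] [Module ℝ E]

lemma PConvex.rpow_add_rpow_smul_mem (hp0 : 0 < p) {B : Set E} (hB : PConvex p B) {y : E}
    (hy : y ∈ B) {u : ℝ} (hu0 : 0 ≤ u) (hu1 : u ≤ 1) :
    (u ^ (1 / p ^ 2) + (1 - u) ^ (1 / p ^ 2)) • y ∈ B := by
  have hv0 : 0 ≤ 1 - u := sub_nonneg.2 hu1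
  have rpow_one_div_rpow : ∀ w : ℝ, 0 ≤ w → (w ^ (1 / p)) ^ p = w := fun w hw => by
    rw [← Real.rpow_mul hw, one_div_mul_cancel hp0.ne', Real.rpow_one]
  have rpow_one_div_rpow_one_div : ∀ w : ℝ, 0 ≤ w → (w ^ (1 / p)) ^ (1 / p) = w ^ (1 / p ^ 2) :=
    fun w hw => by rw [← Real.rpow_mul hw, div_mul_div_comm, one_mul, sq]
  have h := hB y hy y hy (u ^ (1 / p)) ((1 - u) ^ (1 / p)) (by positivity) (by positivity)
    (by rw [rpow_one_div_rpow u hu0, rpow_one_div_rpow _ hv0]; ring)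
  rwa [rpow_one_div_rpow_one_div u hu0, rpow_one_div_rpow_one_div _ hv0, ← add_smul] at h

lemma smul_mem_of_forall_Icc_smul_mem {B : Set E} {m : ℝ} (hm0 : 0 < m) (hm1 : m < 1)
    (h : ∀ y ∈ B, ∀ r ∈ Icc m 1, r • y ∈ B) {y : E} (hy : y ∈ B) {r : ℝ} (hr : r ∈ Ioc 0 1) :
    r • y ∈ B := by
  obtain ⟨n, hn⟩ := exists_pow_lt_of_lt_one hr.1 hm1
  suffices ∀ n : ℕ, ∀ r ∈ Icc (m ^ n) 1, r • y ∈ B from this n r ⟨hn.le, hr.2⟩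
  intro n
  induction n with
  | zero =>
    rintro r ⟨hr1, hr1'⟩
    rw [pow_zero] at hr1
    rw [le_antisymm hr1' hr1, one_smul]
    exact hy
  | succ n ih =>
    rintro r ⟨hmr, hr1⟩
    rcases le_or_gt m r with hm | hm
    · exact h y hy r ⟨hm, hr1⟩
    · have hdiv : (r / m) • y ∈ B :=
        ih (r / m) ⟨by rwa [le_div_iff₀ hm0, ← pow_succ], (div_le_one hm0).2 hm.le⟩
      simpa only [smul_smul, mul_div_cancel₀ _ hm0.ne'] using h _ hdiv m ⟨le_rfl, hm1.le⟩

lemma PConvex.smul_mem (hp0 : 0 < p) (hp1 : p < 1) {B : Set E} (hB : PConvex p B) {y : E}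
    (hy : y ∈ B) {r : ℝ} (hr : r ∈ Ioc 0 1) : r • y ∈ B := by
  have hq : 1 < 1 / p ^ 2 := by
    rw [lt_div_iff₀ (by positivity)]
    nlinarith
  have hm1 : 2 * (2⁻¹ : ℝ) ^ (1 / p ^ 2) < 1 :=
    calc 2 * (2⁻¹ : ℝ) ^ (1 / p ^ 2) < 2 * 2⁻¹ := by
          gcongr
          exact Real.rpow_lt_self_of_lt_one (by norm_num) (by norm_num) hq
      _ = 1 := by norm_num
  refine smul_mem_of_forall_Icc_smul_mem (by positivity) hm1 (fun z hz r hr => ?_) hy hr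
  obtain ⟨u, ⟨hu0, hu1⟩, rfl⟩ := exists_rpow_add_rpow_eq (by positivity) hr
  exact hB.rpow_add_rpow_smul_mem hp0 hz hu0 hu1

theorem pConvexHull_singleton (hp0 : 0 < p) (hp1 : p < 1) (x : E) :
    PConvexHull p {x} = (fun t : ℝ => t • x) '' Ioc 0 1 := by
  refine subset_antisymm (sInter_subset_of_mem ⟨?_, ?_⟩) ?_
  · exact (pConvex_Ioc_zero_one hp0 hp1.le).image (LinearMap.toSpanSingleton ℝ E x)
  · exact singleton_subset_iff.2 ⟨1, right_mem_Ioc.2 one_pos, one_smul ℝ x⟩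
  · rintro _ ⟨t, ht, rfl⟩
    exact mem_sInter.2 fun B ⟨hB, hxB⟩ => hB.smul_mem hp0 hp1 (hxB rfl) ht

theorem closure_image_smul_Ioc [TopologicalSpace E] [ContinuousSMul ℝ E] [T2Space E] (x : E) :
    closure ((fun t : ℝ => t • x) '' Ioc 0 1) = (fun t : ℝ => t • x) '' Icc 0 1 := by
  have hf : Continuous fun t : ℝ => t • x := continuous_id.smul continuous_const
  refine subset_antisymm
    (closure_minimal (image_mono Ioc_subset_Icc_self) (isCompact_Icc.image hf).isClosed) ?_
  rw [← closure_Ioc zero_ne_one]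
  exact image_closure_subset_closure_image hf

end Scaling

theorem stmt2_general {E : Type*} [AddCommGroup E] [Module ℝ E] [TopologicalSpace E]
    [ContinuousSMul ℝ E] [T2Space E]
    (p : ℝ) (hp0 : 0 < p) (hp1 : p < 1) (x : E) :
    (x ≠ 0 → PConvexHull p {x} = (fun t : ℝ => t • x) '' Set.Ioc (0 : ℝ) 1) ∧
    (x = 0 → PConvexHull p {x} = {0}) ∧
    (x ≠ 0 → closure (PConvexHull p {x}) = (fun t : ℝ => t • x) '' Set.Icc (0 : ℝ) 1) ∧
    (x = 0 → closure (PConvexHull p {x}) = {0}) := by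
  have hull := pConvexHull_singleton hp0 hp1 x
  have hzero : (fun t : ℝ => t • (0 : E)) '' Ioc 0 1 = {0} := by
    simpa only [smul_zero] using (nonempty_Ioc.2 one_pos).image_const (0 : E)
  refine ⟨fun _ => hull, ?_, fun _ => hull ▸ closure_image_smul_Ioc x, ?_⟩
  · rintro rfl
    rw [hull, hzero]
  · rintro rfl
    rw [hull, hzero, closure_singleton]

theorem stmt2 {E : Type*} [AddCommGroup E] [Module ℝ E] [TopologicalSpace E]
    [IsTopologicalAddGroup E] [ContinuousSMul ℝ E] [T2Space E]
    (p : ℝ) (hp0 : 0 < p) (hp1 : p < 1) (x : E) :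
    (x ≠ 0 → PConvexHull p {x} = (fun t : ℝ => t • x) '' Set.Ioc (0 : ℝ) 1) ∧
    (x = 0 → PConvexHull p {x} = {0}) ∧
    (x ≠ 0 → closure (PConvexHull p {x}) = (fun t : ℝ => t • x) '' Set.Icc (0 : ℝ) 1) ∧
    (x = 0 → closure (PConvexHull p {x}) = {0}) :=
  stmt2_general p hp0 hp1 x
end
end
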